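/- arXiv:2308.15306 — 2 statements merged into one kernel-verified Lean document; each statement's English description precedes it below -/
import Mathlib

section
/- Let U be a finite set with weight function w : U → ℕ, let 0 < δ < 1, γ = 1 + δ/2, and partition U into sets U_i = {u ∈ U : γ^i ≤ w(u) < γ^{i+1}} for i ≥ 0 (assuming w(u) ≥ 1 for all u). Let n = |U|, d = ⌈(2/δ)·log₂(2n/δ)⌉, and let S ⊆ U be nonempty with largest index k such that S ∩ U_k ≠ ∅. Then w(⋃_{i < k−d} U_i) ≤ (δ/2)·w(S). -/
lemma two_rpow_le_one_add {x : ℝ} (hx : 0 ≤ x) (hx1 : x ≤ 1) : (2:ℝ) ^ x ≤ 1 + x := by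
  have h := convexOn_exp.2 (Set.mem_univ (0:ℝ)) (Set.mem_univ (Real.log 2))
    (by linarith : (0:ℝ) ≤ 1 - x) hx (by ring)
  simp only [smul_eq_mul, mul_zero, zero_add, Real.exp_zero, Real.exp_log two_pos] at h
  rw [Real.rpow_def_of_pos two_pos, mul_comm]
  linarith

/-- Weight of the low-weight blocks: with weight classes
`U_i = {u : γ^i ≤ w(u) < γ^{i+1}}`, `γ = 1 + δ/2`, `n = |U|` and
`d = ⌈(2/δ)·log₂(2n/δ)⌉`, if `k` is the largest index with `S ∩ U_k ≠ ∅`,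
then `w(⋃_{i < k−d} U_i) ≤ (δ/2)·w(S)`. -/
theorem low_blocks_weight_small {V : Type*} [Fintype V] [DecidableEq V]
    (w : V → ℕ) (hw : ∀ u, 1 ≤ w u)
    (δ : ℝ) (hδ0 : 0 < δ) (hδ1 : δ < 1)
    (γ : ℝ) (hγ : γ = 1 + δ / 2)
    (Ui : ℕ → Finset V)
    (hUi : ∀ i, ∀ u : V, u ∈ Ui i ↔ γ ^ i ≤ (w u : ℝ) ∧ (w u : ℝ) < γ ^ (i + 1))
    (n : ℕ) (hn : n = Fintype.card V)
    (d : ℕ) (hd : d = ⌈(2 / δ) * Real.logb 2 (2 * n / δ)⌉₊)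
    (S : Finset V) (k : ℕ)
    (hk : (S ∩ Ui k).Nonempty)
    (hkmax : ∀ j, k < j → S ∩ Ui j = ∅) :
    ((∑ u ∈ ((Finset.range k).filter (fun i => i + d < k)).biUnion Ui, w u : ℕ) : ℝ)
      ≤ (δ / 2) * (∑ u ∈ S, w u : ℕ) := by
  have hγ1 : (1:ℝ) < γ := by rw [hγ]; linarith
  have hγ0 : (0:ℝ) < γ := by linarith
  -- element of S ∩ U_k
  obtain ⟨u0, hu0⟩ := hk
  rw [Finset.mem_inter] at hu0
  have hu0S := hu0.1
  have hu0w : γ ^ k ≤ (w u0 : ℝ) := ((hUi k u0).1 hu0.2).1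
  -- n ≥ 1
  have hn1 : 1 ≤ n := by
    rw [hn]; exact Fintype.card_pos_iff.mpr ⟨u0⟩
  -- w(S) ≥ γ^k
  have hwS : γ ^ k ≤ ((∑ u ∈ S, w u : ℕ) : ℝ) := by
    refine hu0w.trans ?_
    have : w u0 ≤ ∑ u ∈ S, w u := Finset.single_le_sum (fun i _ => Nat.zero_le _) hu0S
    exact_mod_cast this
  have hwS0 : (0:ℝ) ≤ ((∑ u ∈ S, w u : ℕ) : ℝ) := by positivity
  -- key: γ^d ≥ 2n/δ
  have hkey : 2 * n / δ ≤ γ ^ d := by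
    have hpos : (0:ℝ) < 2 * n / δ := by
      have : (1:ℝ) ≤ (n:ℝ) := by exact_mod_cast hn1
      positivity
    have h2 : (2:ℝ) ^ (δ/2) ≤ γ := by
      rw [hγ]; exact two_rpow_le_one_add (by linarith) (by linarith)
    have hd' : (2 / δ) * Real.logb 2 (2 * n / δ) ≤ (d:ℝ) := by
      rw [hd]; exact Nat.le_ceil _
    have hlog : Real.logb 2 (2 * n / δ) ≤ δ / 2 * d := by
      have h := mul_le_mul_of_nonneg_left hd' (by positivity : (0:ℝ) ≤ δ / 2)
      calc Real.logb 2 (2 * n / δ) = δ / 2 * ((2 / δ) * Real.logb 2 (2 * n / δ)) := by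
            field_simp
        _ ≤ δ / 2 * d := h
    calc 2 * n / δ = (2:ℝ) ^ Real.logb 2 (2 * n / δ) := by
          rw [Real.rpow_logb two_pos (by norm_num) hpos]
      _ ≤ (2:ℝ) ^ (δ / 2 * (d:ℝ)) := by
          apply Real.rpow_le_rpow_left_iff (by norm_num : (1:ℝ) < 2) |>.mpr hlog
      _ = ((2:ℝ) ^ (δ/2)) ^ (d:ℝ) := by rw [Real.rpow_mul (by norm_num : (0:ℝ) ≤ 2)]
      _ = ((2:ℝ) ^ (δ/2)) ^ d := by rw [Real.rpow_natCast]
      _ ≤ γ ^ d := pow_le_pow_left₀ (by positivity) h2 d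
  -- case split
  by_cases hkd : k ≤ d
  · have : (Finset.range k).filter (fun i => i + d < k) = ∅ := by
      ext i; simp only [Finset.mem_filter, Finset.mem_range, Finset.notMem_empty, iff_false]
      rintro ⟨_, h⟩; omega
    rw [this]
    simp
    positivity
  push_neg at hkd
  -- each element of the union has weight < γ^(k-d)
  set T := ((Finset.range k).filter (fun i => i + d < k)).biUnion Ui with hT
  have hbound : ∀ u ∈ T, (w u : ℝ) ≤ γ ^ (k - d) := by
    intro u hu
    rw [Finset.mem_biUnion] at hu
    obtain ⟨i, hi, hui⟩ := hu
    rw [Finset.mem_filter] at hi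
    have h1 : (w u : ℝ) < γ ^ (i+1) := ((hUi i u).1 hui).2
    have h2 : γ ^ (i+1) ≤ γ ^ (k - d) := pow_le_pow_right₀ (le_of_lt hγ1) (by omega)
    linarith
  have hsum : ((∑ u ∈ T, w u : ℕ) : ℝ) ≤ (n:ℝ) * γ ^ (k - d) := by
    push_cast
    calc ∑ u ∈ T, (w u : ℝ) ≤ T.card • γ ^ (k-d) := Finset.sum_le_card_nsmul T _ _ hbound
      _ = (T.card : ℝ) * γ ^ (k-d) := by rw [nsmul_eq_mul]
      _ ≤ (n:ℝ) * γ ^ (k-d) := by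
          apply mul_le_mul_of_nonneg_right _ (by positivity)
          have : T.card ≤ Fintype.card V := Finset.card_le_univ T
          rw [hn]; exact_mod_cast this
  refine hsum.trans ?_
  -- n * γ^(k-d) ≤ δ/2 * γ^k ≤ δ/2 * w(S)
  have hstep : (n:ℝ) * γ ^ (k - d) ≤ δ / 2 * γ ^ k := by
    have hpowpos : (0:ℝ) < γ ^ (k-d) := by positivity
    have h1 : (n:ℝ) ≤ δ / 2 * γ ^ d := by
      have := mul_le_mul_of_nonneg_left hkey (by positivity : (0:ℝ) ≤ δ / 2)
      calc (n:ℝ) = δ / 2 * (2 * n / δ) := by field_simp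
        _ ≤ δ / 2 * γ ^ d := this
    calc (n:ℝ) * γ ^ (k-d) ≤ (δ / 2 * γ ^ d) * γ ^ (k-d) :=
          mul_le_mul_of_nonneg_right h1 (le_of_lt hpowpos)
      _ = δ / 2 * γ ^ (d + (k - d)) := by rw [pow_add]; ring
      _ = δ / 2 * γ ^ k := by congr 2; omega
  refine hstep.trans ?_
  exact mul_le_mul_of_nonneg_left hwS (by positivity)
end

section
/- Let U be a finite set, w : U → ℕ, α, β ≥ 1, and let E ⊆ 2^U × ℕ be an (α,β)-extension family of U and w. Let F be a monotone set system on U and O an α-extension oracle for (U,w,F). Then there exists (T,ℓ) ∈ E such that T ∪ O(T,ℓ) ∈ F and w(T) + w(O(T,ℓ)) ≤ β · min{w(S) : S ∈ F}. -/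
/-- If `E` is an `(α,β)`-extension family, `F` a monotone set system and `O` an
`α`-extension oracle for `(U,w,F)`, then some `(T,ℓ) ∈ E` satisfies
`T ∪ O(T,ℓ) ∈ F` and `w(T) + w(O(T,ℓ)) ≤ β·min{w(S) : S ∈ F}`. -/
theorem extension_family_approx {V : Type*} [Fintype V] [DecidableEq V]
    (w : V → ℕ) (α β : ℝ) (hα : 1 ≤ α) (hβ : 1 ≤ β)
    (E : Set (Finset V × ℕ))
    (hE : ∀ S : Finset V, ∃ p ∈ E, ((S \ p.1).card ≤ p.2 ∧
      ((∑ u ∈ p.1, w u : ℕ) : ℝ) + α * (∑ u ∈ S \ p.1, w u : ℕ) ≤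
        β * (∑ u ∈ S, w u : ℕ)))
    (F : Set (Finset V))
    (hFuniv : Finset.univ ∈ F)
    (hFmono : ∀ S T : Finset V, S ∈ F → S ⊆ T → T ∈ F)
    (O : Finset V → ℕ → Finset V)
    (hO1 : ∀ S ℓ, S ∪ O S ℓ ∈ F)
    (hO2 : ∀ S ℓ, ∀ X : Finset V, X.card ≤ ℓ → X ∪ S ∈ F →
      ((∑ u ∈ O S ℓ, w u : ℕ) : ℝ) ≤ α * (∑ u ∈ X, w u : ℕ)) :
    ∃ p ∈ E, p.1 ∪ O p.1 p.2 ∈ F ∧ ∀ S ∈ F,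
      ((∑ u ∈ p.1, w u : ℕ) : ℝ) + ((∑ u ∈ O p.1 p.2, w u : ℕ) : ℝ) ≤
        β * (∑ u ∈ S, w u : ℕ) := by
  classical
  obtain ⟨S₀, hS₀F, hmin⟩ : ∃ S ∈ F, ∀ S' ∈ F, ∑ u ∈ S, w u ≤ ∑ u ∈ S', w u := by
    have hne : (Finset.univ.filter (fun S : Finset V => S ∈ F)).Nonempty :=
      ⟨Finset.univ, by simp [hFuniv]⟩
    obtain ⟨S, hS, h⟩ := Finset.exists_min_image _ (fun S => ∑ u ∈ S, w u) hne
    exact ⟨S, (Finset.mem_filter.mp hS).2, fun S' hS' => h S' (by simp [hS'])⟩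
  obtain ⟨p, hpE, hcard, hbound⟩ := hE S₀
  have hF2 : (S₀ \ p.1) ∪ p.1 ∈ F := by
    refine hFmono S₀ _ hS₀F ?_
    intro x hx
    by_cases hxp : x ∈ p.1 <;> simp [Finset.mem_union, Finset.mem_sdiff, hx, hxp]
  have hO := hO2 p.1 p.2 (S₀ \ p.1) hcard hF2
  refine ⟨p, hpE, hO1 _ _, ?_⟩
  intro S hS
  have h1 : ((∑ u ∈ p.1, w u : ℕ) : ℝ) + ((∑ u ∈ O p.1 p.2, w u : ℕ) : ℝ) ≤
      β * (∑ u ∈ S₀, w u : ℕ) := le_trans (by linarith) hbound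
  have h2 : (β : ℝ) * (∑ u ∈ S₀, w u : ℕ) ≤ β * (∑ u ∈ S, w u : ℕ) := by
    have := hmin S hS
    have : ((∑ u ∈ S₀, w u : ℕ) : ℝ) ≤ (∑ u ∈ S, w u : ℕ) := by exact_mod_cast this
    nlinarith
  linarith
end
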